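/- Let Δ be a finite simple graph with vertex set V, let v ∈ V, and let link(v) be the set of neighbors of v in Δ. Let k ≥ 1, let ε_1,…,ε_k ∈ {+1,−1}, and let g_0, g_1, …, g_k be elements of the subgroup of G(Δ) generated by the generators corresponding to V ∖ {v}. If g_0 v^{ε_1} g_1 v^{ε_2} g_2 ⋯ v^{ε_k} g_k = 1 in G(Δ), then there exists an index i with 1 ≤ i ≤ k − 1 such that ε_{i+1} = −ε_i and g_i lies in the subgroup of G(Δ) generated by the generators corresponding to link(v). -/

import Mathlib

/-! Deleting the vertex `v` exhibits `G(Δ)` as an HNN extension of `G(Δ ∖ v)` with stable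
letter `v`, whose associated subgroups are both the subgroup `L` generated by `link(v)` and
whose associated isomorphism is the identity: `v` commutes with `L`. A homomorphism
back to `G(Δ)` sending the stable letter to `v` is a left inverse, so the relation
`g₀ v^ε₁ g₁ ⋯ v^εₖ gₖ = 1` holds in the HNN extension, and Britton's lemma there produces a
pinch `v^εᵢ gᵢ v^(-εᵢ)` with `gᵢ ∈ L`. -/

/-- The set of relators of the right-angled Artin group of a simple graph:
commutators of generators corresponding to adjacent vertices. -/
def raagRels {V : Type*} (G : SimpleGraph V) : Set (FreeGroup V) :=
  {r | ∃ a b : V, G.Adj a b ∧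
    r = FreeGroup.of a * FreeGroup.of b * (FreeGroup.of a)⁻¹ * (FreeGroup.of b)⁻¹}

/-- The right-angled Artin group of a simple graph. -/
abbrev RAAG {V : Type*} (G : SimpleGraph V) : Type _ :=
  PresentedGroup (raagRels G)

/-- The generator of the right-angled Artin group corresponding to a vertex. -/
def raagGen {V : Type*} (G : SimpleGraph V) (v : V) : RAAG G :=
  PresentedGroup.of v

namespace HNNExtension

variable {G : Type*} [Group G] {A B : Subgroup G} {φ : A ≃* B}

theorem toSubgroup_self (A : Subgroup G) (u : ℤˣ) : toSubgroup A A u = A := by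
  rcases Int.units_eq_one_or u with rfl | rfl <;> rfl

theorem exists_pinch_of_mem_range {k : ℕ} (hk : k ≠ 0) (u : Fin k → ℤˣ)
    (h : Fin (k + 1) → G)
    (hprod : of (h 0) * (List.ofFn fun i : Fin k => (t : HNNExtension G A B φ) ^ (u i : ℤ) *
      of (h i.succ)).prod ∈ (of : G →* HNNExtension G A B φ).range) :
    ∃ (i : ℕ) (hi : i + 1 < k), u ⟨i + 1, hi⟩ ≠ u ⟨i, Nat.lt_of_succ_lt hi⟩ ∧
      h ⟨i + 1, Nat.lt_succ_of_lt hi⟩ ∈ toSubgroup A B (u ⟨i, Nat.lt_of_succ_lt hi⟩) := by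
  by_contra! hreduced
  let w : NormalWord.ReducedWord G A B :=
    { head := h 0
      toList := List.ofFn fun i : Fin k => (u i, h i.succ)
      chain := by
        refine List.isChain_iff_getElem.2 fun i hi hmem => ?_
        simp only [List.length_ofFn] at hi
        simp only [List.getElem_ofFn] at hmem ⊢
        by_contra hne
        exact hreduced i hi (Ne.symm hne) hmem }
  have hnil : w.toList = [] := ReducedWord.toList_eq_nil_of_mem_of_range φ w (by
    simpa [w, NormalWord.ReducedWord.prod, List.map_ofFn, Function.comp_def] using hprod)
  simp [w, hk] at hnil

end HNNExtension

namespace RAAG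

variable {V W H : Type*} [Group H] {Γ : SimpleGraph V}

theorem gen_commute {a b : V} (hab : Γ.Adj a b) : Commute (raagGen Γ a) (raagGen Γ b) := by
  have hrel : PresentedGroup.mk (raagRels Γ)
      (FreeGroup.of a * FreeGroup.of b * (FreeGroup.of a)⁻¹ * (FreeGroup.of b)⁻¹) = 1 :=
    PresentedGroup.one_of_mem ⟨a, b, hab, rfl⟩
  simp only [map_mul, map_inv] at hrel
  exact mul_inv_eq_one.1 (by rw [mul_inv_rev, ← mul_assoc]; exact hrel)

def lift (f : V → H) (hf : ∀ a b, Γ.Adj a b → Commute (f a) (f b)) : RAAG Γ →* H :=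
  PresentedGroup.toGroup (f := f) <| by
    rintro r ⟨a, b, hab, rfl⟩
    simp [(hf a b hab).eq]

@[simp]
theorem lift_gen (f : V → H) (hf : ∀ a b, Γ.Adj a b → Commute (f a) (f b)) (u : V) :
    lift f hf (raagGen Γ u) = f u :=
  PresentedGroup.toGroup.of _

theorem hom_ext {F F' : RAAG Γ →* H} (h : ∀ u, F (raagGen Γ u) = F' (raagGen Γ u)) :
    F = F' :=
  PresentedGroup.ext h

def map {Γ' : SimpleGraph W} (f : Γ →g Γ') : RAAG Γ →* RAAG Γ' :=
  lift (fun u => raagGen Γ' (f u)) fun _ _ hab => gen_commute (f.map_adj hab)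

@[simp]
theorem map_gen {Γ' : SimpleGraph W} (f : Γ →g Γ') (u : V) :
    map f (raagGen Γ u) = raagGen Γ' (f u) :=
  lift_gen _ _ u

theorem map_closure_gen {Γ' : SimpleGraph W} (f : Γ →g Γ') (s : Set V) :
    (Subgroup.closure (raagGen Γ '' s)).map (map f) =
      Subgroup.closure (raagGen Γ' '' (f '' s)) := by
  rw [MonoidHom.map_closure, Set.image_image, Set.image_image]
  simp

section Link

open HNNExtension

variable (Δ : SimpleGraph V) (v : V)

def linkSubgroup : Subgroup (RAAG (Δ.induce {v}ᶜ)) :=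
  Subgroup.closure (raagGen _ '' {u | Δ.Adj v u})

abbrev LinkHNN : Type _ :=
  HNNExtension (RAAG (Δ.induce {v}ᶜ)) (linkSubgroup Δ v) (linkSubgroup Δ v) (MulEquiv.refl _)

abbrev induceInclusion : RAAG (Δ.induce {v}ᶜ) →* RAAG Δ :=
  map (SimpleGraph.Embedding.induce _).toHom

theorem map_linkSubgroup :
    (linkSubgroup Δ v).map (induceInclusion Δ v) =
      Subgroup.closure (raagGen Δ '' {u | Δ.Adj v u}) := by
  rw [linkSubgroup, map_closure_gen]
  congr
  ext u
  exact ⟨fun ⟨w, hw, hwu⟩ => hwu ▸ hw, fun hu => ⟨⟨u, hu.ne.symm⟩, hu, rfl⟩⟩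

theorem gen_mem_linkSubgroup {u : V} (hu : Δ.Adj v u) :
    raagGen (Δ.induce {v}ᶜ) ⟨u, hu.ne.symm⟩ ∈ linkSubgroup Δ v :=
  Subgroup.subset_closure ⟨_, hu, rfl⟩

theorem t_commute_of_mem_linkSubgroup {x : RAAG (Δ.induce {v}ᶜ)} (hx : x ∈ linkSubgroup Δ v) :
    Commute (t : LinkHNN Δ v) (of x) := by
  simpa [Commute, SemiconjBy] using
    t_mul_of (φ := MulEquiv.refl (linkSubgroup Δ v)) ⟨x, hx⟩

theorem closure_link_le_centralizer :
    Subgroup.closure (raagGen Δ '' {u | Δ.Adj v u}) ≤ Subgroup.centralizer {raagGen Δ v} :=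
  (Subgroup.closure_le _).2 <| by
    rintro _ ⟨u, hu, rfl⟩
    exact Subgroup.mem_centralizer_singleton_iff.2 (gen_commute hu).symm.eq

def ofLinkHNN : LinkHNN Δ v →* RAAG Δ :=
  HNNExtension.lift (induceInclusion Δ v) (raagGen Δ v) fun a => by
    have ha : induceInclusion Δ v a ∈ Subgroup.centralizer {raagGen Δ v} :=
      closure_link_le_centralizer Δ v <| map_linkSubgroup Δ v ▸ Subgroup.mem_map_of_mem _ a.2
    exact (Subgroup.mem_centralizer_singleton_iff.1 ha).symm

@[simp]
theorem ofLinkHNN_t : ofLinkHNN Δ v t = raagGen Δ v :=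
  HNNExtension.lift_t _ _ _

@[simp]
theorem ofLinkHNN_of (x : RAAG (Δ.induce {v}ᶜ)) :
    ofLinkHNN Δ v (of x) = induceInclusion Δ v x :=
  HNNExtension.lift_of _ _ _ x

section

variable [DecidableEq V]

def toLinkHNN : RAAG Δ →* LinkHNN Δ v :=
  lift (fun u => if h : u = v then t else of (raagGen _ ⟨u, h⟩)) <| by
    intro a b hab
    by_cases ha : a = v <;> by_cases hb : b = v
    · exact absurd hab (ha ▸ hb ▸ Δ.loopless.irrefl v)
    · subst ha
      simpa [hb] using t_commute_of_mem_linkSubgroup Δ a (gen_mem_linkSubgroup Δ a hab)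
    · subst hb
      simpa [ha] using
        (t_commute_of_mem_linkSubgroup Δ b (gen_mem_linkSubgroup Δ b hab.symm)).symm
    · have hab' : (Δ.induce {v}ᶜ).Adj ⟨a, ha⟩ ⟨b, hb⟩ := hab
      simpa [ha, hb] using (gen_commute hab').map of

@[simp]
theorem toLinkHNN_gen_self : toLinkHNN Δ v (raagGen Δ v) = t := by
  simp [toLinkHNN]

theorem toLinkHNN_gen_of_ne {u : V} (hu : u ≠ v) :
    toLinkHNN Δ v (raagGen Δ u) = of (raagGen _ ⟨u, hu⟩) := by
  simp [toLinkHNN, hu]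

theorem ofLinkHNN_toLinkHNN (x : RAAG Δ) : ofLinkHNN Δ v (toLinkHNN Δ v x) = x := by
  suffices (ofLinkHNN Δ v).comp (toLinkHNN Δ v) = MonoidHom.id _ from DFunLike.congr_fun this x
  refine hom_ext fun u => ?_
  by_cases hu : u = v
  · subst hu
    simp
  · simp [toLinkHNN_gen_of_ne Δ v hu]

theorem toLinkHNN_mem_range {x : RAAG Δ}
    (hx : x ∈ Subgroup.closure (raagGen Δ '' {u | u ≠ v})) :
    toLinkHNN Δ v x ∈ (of : RAAG (Δ.induce {v}ᶜ) →* LinkHNN Δ v).range := by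
  refine (Subgroup.closure_le (of.range.comap (toLinkHNN Δ v))).2 ?_ hx
  rintro _ ⟨u, hu : u ≠ v, rfl⟩
  exact ⟨raagGen _ ⟨u, hu⟩, (toLinkHNN_gen_of_ne Δ v hu).symm⟩

end

end Link

end RAAG

/-- Britton's lemma for the HNN structure of `G(Δ)` over the vertex `v`:
if `g 0 * v^(ε 1) * g 1 * ⋯ * v^(ε k) * g k = 1`, with each `g i` in the subgroup
generated by the generators corresponding to `V ∖ {v}`, then some `g (i+1)` lying
between `v^(ε i)` and `v^(ε (i+1))` with `ε (i+1) = -ε i` belongs to the subgroup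
generated by the generators corresponding to the link of `v`. -/
theorem raag_britton {V : Type*} (Δ : SimpleGraph V) (v : V)
    (k : ℕ) (hk : 1 ≤ k) (ε : Fin k → ℤ) (hε : ∀ i : Fin k, ε i = 1 ∨ ε i = -1)
    (g : Fin (k + 1) → RAAG Δ)
    (hg : ∀ i : Fin (k + 1), g i ∈ Subgroup.closure (raagGen Δ '' {u : V | u ≠ v}))
    (hprod : g 0 * (List.ofFn fun i : Fin k =>
        (raagGen Δ v) ^ (ε i) * g i.succ).prod = 1) :
    ∃ (i : ℕ) (hi : i + 1 < k),
      ε ⟨i + 1, hi⟩ = - ε ⟨i, by omega⟩ ∧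
      g ⟨i + 1, by omega⟩ ∈ Subgroup.closure (raagGen Δ '' {u : V | Δ.Adj v u}) := by
  classical
  choose h hh using fun i => RAAG.toLinkHNN_mem_range Δ v (hg i)
  let e : Fin k → ℤˣ := fun i => (Int.isUnit_iff.2 (hε i)).unit
  have hword : HNNExtension.of (h 0) * (List.ofFn fun i : Fin k => (HNNExtension.t :
      RAAG.LinkHNN Δ v) ^ (e i : ℤ) * HNNExtension.of (h i.succ)).prod = 1 := by
    simpa [hh, map_list_prod, List.map_ofFn, Function.comp_def, e] using
      congrArg (RAAG.toLinkHNN Δ v) hprod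
  obtain ⟨i, hi, hne, hmem⟩ :=
    HNNExtension.exists_pinch_of_mem_range (by omega) e h (hword ▸ one_mem _)
  refine ⟨i, hi, by simpa [e] using congrArg Units.val (Int.units_ne_iff_eq_neg.1 hne), ?_⟩
  rw [HNNExtension.toSubgroup_self] at hmem
  rw [← RAAG.ofLinkHNN_toLinkHNN Δ v (g _), ← hh, RAAG.ofLinkHNN_of, ← RAAG.map_linkSubgroup]
  exact Subgroup.mem_map_of_mem _ hmem
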